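/- The dual function d(λ) = β ∑_z ρ(z) log Q(z,λ) + λ C + (β/2) λ² is differentiable on ℝ, and for every λ ∈ ℝ its derivative equals d′(λ) = −∑_z ρ(z) ∑_{a∈{0,1}} π_λ(a|z) w2(z) c(z,a) + C + β λ. -/

import Mathlib

open Finset

/-- `q_λ(z,a) = w1(z) r(z,a) − λ w2(z) c(z,a)`. -/
noncomputable def qfun {Z : Type*} (r c : Z → Bool → ℝ) (w1 w2 : Z → ℝ)
    (lam : ℝ) (z : Z) (a : Bool) : ℝ :=
  w1 z * r z a - lam * (w2 z * c z a)

/-- Partition function `Q(z,λ) = ∑_a exp(q_λ(z,a)/β)`. -/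
noncomputable def Qpart {Z : Type*} (r c : Z → Bool → ℝ) (w1 w2 : Z → ℝ)
    (β lam : ℝ) (z : Z) : ℝ :=
  ∑ a, Real.exp (qfun r c w1 w2 lam z a / β)

/-- Gibbs policy `π_λ(a|z) = exp(q_λ(z,a)/β) / Q(z,λ)`. -/
noncomputable def gibbs {Z : Type*} (r c : Z → Bool → ℝ) (w1 w2 : Z → ℝ)
    (β lam : ℝ) (z : Z) (a : Bool) : ℝ :=
  Real.exp (qfun r c w1 w2 lam z a / β) / Qpart r c w1 w2 β lam z

/-- The dual function `d(λ) = β ∑_z ρ(z) log Q(z,λ) + λ C + (β/2) λ²`. -/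
noncomputable def dualFun {Z : Type*} [Fintype Z] (ρ : Z → ℝ)
    (r c : Z → Bool → ℝ) (w1 w2 : Z → ℝ) (β C lam : ℝ) : ℝ :=
  β * ∑ z, ρ z * Real.log (Qpart r c w1 w2 β lam z) + lam * C + β * lam ^ 2 / 2

/- The dual is `β ∑_z ρ(z) log Q(z,λ)` plus a quadratic in `λ`. Each `log Q(z,·)` is a log-sum-exp
of functions affine in `λ`, and the derivative of a log-sum-exp is the softmax (here: Gibbs)
average of the derivatives of the exponents; the slope `-w2(z) c(z,a)/β` of `q_λ(z,a)/β`
then turns `β · d/dλ log Q(z,λ)` into `-∑_a π_λ(a|z) w2(z) c(z,a)`. -/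

theorem hasDerivAt_log_sum_exp {ι : Type*} [Fintype ι] [Nonempty ι] {f : ι → ℝ → ℝ}
    {f' : ι → ℝ} {x : ℝ} (hf : ∀ i, HasDerivAt (f i) (f' i) x) :
    HasDerivAt (fun y => Real.log (∑ i, Real.exp (f i y)))
      (∑ i, Real.exp (f i x) / (∑ j, Real.exp (f j x)) * f' i) x := by
  have hsum_pos : 0 < ∑ j, Real.exp (f j x) :=
    Finset.sum_pos (fun j _ => Real.exp_pos _) univ_nonempty
  have hsum : HasDerivAt (fun y => ∑ i, Real.exp (f i y)) (∑ i, Real.exp (f i x) * f' i) x :=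
    HasDerivAt.fun_sum fun i _ => (hf i).exp
  convert hsum.log hsum_pos.ne' using 1
  rw [Finset.sum_div]
  exact Finset.sum_congr rfl fun i _ => by ring

theorem hasDerivAt_qfun_div {Z : Type*} (r c : Z → Bool → ℝ) (w1 w2 : Z → ℝ) (β lam : ℝ)
    (z : Z) (a : Bool) :
    HasDerivAt (fun l => qfun r c w1 w2 l z a / β) (-(w2 z * c z a) / β) lam := by
  simpa [qfun, neg_div] using
    ((hasDerivAt_const lam (w1 z * r z a)).sub (hasDerivAt_mul_const (w2 z * c z a))).div_const β

theorem hasDerivAt_mul_log_Qpart {Z : Type*} (r c : Z → Bool → ℝ) (w1 w2 : Z → ℝ) {β : ℝ}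
    (hβ : β ≠ 0) (lam : ℝ) (z : Z) :
    HasDerivAt (fun l => β * Real.log (Qpart r c w1 w2 β l z))
      (-∑ a, gibbs r c w1 w2 β lam z a * (w2 z * c z a)) lam := by
  refine ((hasDerivAt_log_sum_exp (hasDerivAt_qfun_div r c w1 w2 β lam z)).const_mul β).congr_deriv
    ?_
  rw [Finset.mul_sum, ← Finset.sum_neg_distrib]
  refine Finset.sum_congr rfl fun a _ => ?_
  rw [gibbs, Qpart]
  field_simp

theorem dual_hasDerivAt_general {Z : Type*} [Fintype Z]
    (ρ : Z → ℝ)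
    (r c : Z → Bool → ℝ) (w1 w2 : Z → ℝ)
    (β : ℝ) (hβ : 0 < β) (C : ℝ) :
    ∀ lam : ℝ,
      HasDerivAt (fun l => dualFun ρ r c w1 w2 β C l)
        (-(∑ z, ρ z * ∑ a, gibbs r c w1 w2 β lam z a * (w2 z * c z a)) + C + β * lam)
        lam := by
  intro lam
  have hlog : HasDerivAt (fun l => β * ∑ z, ρ z * Real.log (Qpart r c w1 w2 β l z))
      (-∑ z, ρ z * ∑ a, gibbs r c w1 w2 β lam z a * (w2 z * c z a)) lam := by
    have h := HasDerivAt.fun_sum (u := univ) fun z _ =>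
      (hasDerivAt_mul_log_Qpart r c w1 w2 hβ.ne' lam z).const_mul (ρ z)
    simp only [Finset.mul_sum, mul_left_comm β, mul_neg, Finset.sum_neg_distrib] at h ⊢
    exact h
  have hquad : HasDerivAt (fun l : ℝ => β * l ^ 2 / 2) (β * lam) lam := by
    refine (((hasDerivAt_pow 2 lam).const_mul β).div_const 2).congr_deriv ?_
    push_cast
    ring
  exact (hlog.add (hasDerivAt_mul_const C)).add hquad

/-- the dual function `d` is differentiable on `ℝ`, with
`d′(λ) = −∑_z ρ(z) ∑_a π_λ(a|z) w2(z) c(z,a) + C + β λ`. -/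
theorem dual_hasDerivAt {Z : Type*} [Fintype Z] [Nonempty Z]
    (ρ : Z → ℝ) (hρ_pos : ∀ z, 0 < ρ z) (hρ_sum : ∑ z, ρ z = 1)
    (r c : Z → Bool → ℝ) (w1 w2 : Z → ℝ)
    (hw1 : ∀ z, 0 ≤ w1 z) (hw2 : ∀ z, 0 ≤ w2 z)
    (β : ℝ) (hβ : 0 < β) (C : ℝ) :
    ∀ lam : ℝ,
      HasDerivAt (fun l => dualFun ρ r c w1 w2 β C l)
        (-(∑ z, ρ z * ∑ a, gibbs r c w1 w2 β lam z a * (w2 z * c z a)) + C + β * lam)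
        lam :=
  dual_hasDerivAt_general ρ r c w1 w2 β hβ C
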